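/- arXiv:2310.12777 — 2 statements merged into one kernel-verified Lean document; each statement's English description precedes it below -/
import Mathlib

section
/- For every connected graph G of order n with diameter D, the remoteness satisfies ρ(G) ≥ nD/(2(n-1)). -/
open SimpleGraph Finset

/-- The transmission of a vertex: the sum of distances from `v` to all other vertices. -/
noncomputable def transmission {n : ℕ} (G : SimpleGraph (Fin n)) (v : Fin n) : ℕ :=
  ∑ u, G.dist v u

/-- The proximity: the minimum average distance from a vertex to all others. -/
noncomputable def proximity {n : ℕ} (G : SimpleGraph (Fin n)) : ℝ :=
  sInf {x : ℝ | ∃ v : Fin n, x = transmission G v} / (n - 1)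

/-- The remoteness: the maximum average distance from a vertex to all others. -/
noncomputable def remoteness {n : ℕ} (G : SimpleGraph (Fin n)) : ℝ :=
  sSup {x : ℝ | ∃ v : Fin n, x = transmission G v} / (n - 1)

/-- The diameter of a graph: the maximum distance between two vertices. -/
noncomputable def graphDiam {n : ℕ} (G : SimpleGraph (Fin n)) : ℕ :=
  Finset.univ.sup fun p : Fin n × Fin n => G.dist p.1 p.2

/-!
If `u, v` realise the diameter `D`, every vertex `w` satisfies `d(u, w) + d(w, v) ≥ D`; summing
over `w` gives `t(u) + t(v) ≥ n D`, so the larger of the two transmissions is at least `n D / 2`.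
-/

theorem SimpleGraph.Connected.card_mul_dist_le_sum_dist_add_sum_dist {V : Type*} [Fintype V]
    {G : SimpleGraph V} (hG : G.Connected) (u v : V) :
    Fintype.card V * G.dist u v ≤ ∑ w, G.dist u w + ∑ w, G.dist v w :=
  calc Fintype.card V * G.dist u v = ∑ _w : V, G.dist u v := by simp
    _ ≤ ∑ w, (G.dist u w + G.dist v w) := sum_le_sum fun w _ => by
        rw [G.dist_comm (u := v)]; exact hG.dist_triangle
    _ = ∑ w, G.dist u w + ∑ w, G.dist v w := sum_add_distrib

theorem exists_dist_eq_graphDiam {n : ℕ} (G : SimpleGraph (Fin n)) [Nonempty (Fin n)] :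
    ∃ u v, G.dist u v = graphDiam G := by
  obtain ⟨p, -, hp⟩ := exists_mem_eq_sup univ univ_nonempty fun p : Fin n × Fin n => G.dist p.1 p.2
  exact ⟨p.1, p.2, hp.symm⟩

theorem transmission_le_sSup {n : ℕ} (G : SimpleGraph (Fin n)) (v : Fin n) :
    (transmission G v : ℝ) ≤ sSup {x : ℝ | ∃ v : Fin n, x = transmission G v} := by
  refine le_csSup (Set.Finite.bddAbove ?_) ⟨v, rfl⟩
  exact (Set.finite_range fun v => (transmission G v : ℝ)).subset fun _ ⟨w, hw⟩ => ⟨w, hw.symm⟩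

theorem remoteness_ge_nD {n : ℕ} (G : SimpleGraph (Fin n)) (hG : G.Connected) :
    (n : ℝ) * graphDiam G / (2 * (n - 1)) ≤ remoteness G := by
  have := hG.nonempty
  obtain ⟨u, v, huv⟩ := exists_dist_eq_graphDiam G
  have hsum : (n : ℝ) * graphDiam G ≤ transmission G u + transmission G v := by
    have := hG.card_mul_dist_le_sum_dist_add_sum_dist u v
    rw [Fintype.card_fin, huv] at this
    exact_mod_cast this
  have hn : (0 : ℝ) ≤ n - 1 := sub_nonneg.mpr (mod_cast Fin.pos (Classical.arbitrary _))
  rw [← div_div, remoteness]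
  refine div_le_div_of_nonneg_right ?_ hn
  linarith [transmission_le_sSup G u, transmission_le_sSup G v]
end

section
/- For every connected graph G of order n with diameter D, the remoteness satisfies ρ(G) ≤ D - (D² - D)/(2(n-1)). -/
open SimpleGraph Finset

/-- If some vertex is at distance `i` from `v`, then every `j ≤ i` is realized as a
distance from `v`. -/
lemma exists_dist_eq_aux {V : Type*} (G : SimpleGraph V) (v : V) :
    ∀ i : ℕ, ∀ u : V, G.dist v u = i → ∀ j ≤ i, ∃ x : V, G.dist v x = j := by
  intro i
  induction i with
  | zero =>
    intro u _ j hj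
    exact ⟨v, by simpa [Nat.le_zero.mp hj] using G.dist_self (v := v)⟩
  | succ i ih =>
    intro u hu j hj
    rcases Nat.eq_or_lt_of_le hj with rfl | hj'
    · exact ⟨u, hu⟩
    have hj'' : j ≤ i := Nat.lt_succ_iff.mp hj'
    have hne : G.dist v u ≠ 0 := by omega
    obtain ⟨p, hp⟩ := SimpleGraph.exists_walk_of_dist_ne_zero hne
    have hvu : u ≠ v := by
      intro h; subst h; simp [G.dist_self] at hne
    obtain ⟨x, hadj, q, hq⟩ := SimpleGraph.Walk.exists_eq_cons_of_ne hvu p.reverse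
    have hqlen : q.length = i := by
      have := congrArg SimpleGraph.Walk.length hq
      rw [SimpleGraph.Walk.length_reverse] at this
      simp [hp, hu] at this
      omega
    have hle : G.dist v x ≤ i := by
      have := SimpleGraph.dist_le q.reverse
      simpa [hqlen] using this
    have hreach : G.Reachable v x := ⟨q.reverse⟩
    have hge : i ≤ G.dist v x := by
      obtain ⟨r, hr⟩ := hreach.exists_walk_length_eq_dist
      have htri : G.dist v u ≤ G.dist v x + 1 := by
        have := SimpleGraph.dist_le (r.concat hadj.symm)
        simpa [SimpleGraph.Walk.length_concat, hr] using this
      omega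
    exact ih x (le_antisymm hle hge) j hj''

lemma transmission_bound {n : ℕ} (G : SimpleGraph (Fin n)) (hG : G.Connected) (v : Fin n) :
    2 * transmission G v + graphDiam G * (graphDiam G + 1)
      ≤ 2 * graphDiam G * n := by
  classical
  set D := graphDiam G with hD
  -- eccentricity of v
  set e := Finset.univ.sup (fun u => G.dist v u) with he
  have hdist_le : ∀ u, G.dist v u ≤ e := fun u => Finset.le_sup (by simp)
  have heD : e ≤ D := by
    apply Finset.sup_le
    intro u _
    exact Finset.le_sup (f := fun p : Fin n × Fin n => G.dist p.1 p.2)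
      (Finset.mem_univ (v, u))
  -- D ≤ ... we also need D ≥ e obviously; and the key: each i ≤ e is attained
  have hne : Nonempty (Fin n) := hG.nonempty
  have hn : 0 < n := Fin.pos_iff_nonempty.mpr hne
  obtain ⟨w, hw⟩ : ∃ w : Fin n, G.dist v w = e := by
    obtain ⟨w, _, hw⟩ := Finset.exists_mem_eq_sup Finset.univ
      Finset.univ_nonempty (fun u => G.dist v u)
    exact ⟨w, hw.symm⟩
  have hattain : ∀ i ≤ e, ∃ x : Fin n, G.dist v x = i :=
    exists_dist_eq_aux G v e w hw
  -- choose representative for each i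
  choose f hf using fun i : Fin (e + 1) => hattain i (Nat.lt_succ_iff.mp i.isLt)
  have hfinj : Function.Injective f := by
    intro i j hij
    have : G.dist v (f i) = G.dist v (f j) := by rw [hij]
    rw [hf i, hf j] at this
    exact Fin.ext this
  -- sum of slacks
  have hkey : ∑ i : Fin (e + 1), (e - (i : ℕ)) ≤ ∑ u : Fin n, (e - G.dist v u) := by
    calc ∑ i : Fin (e + 1), (e - (i : ℕ))
        = ∑ i : Fin (e + 1), (e - G.dist v (f i)) := by
          apply Finset.sum_congr rfl; intro i _; rw [hf i]
      _ = ∑ u ∈ Finset.univ.image f, (e - G.dist v u) := by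
          rw [Finset.sum_image (fun a _ b _ h => hfinj h)]
      _ ≤ ∑ u : Fin n, (e - G.dist v u) :=
          Finset.sum_le_sum_of_subset (Finset.subset_univ _)
  have hsum1 : ∑ i : Fin (e + 1), (e - (i : ℕ)) = ∑ i ∈ Finset.range (e + 1), (e - i) := by
    rw [Finset.sum_range fun i => e - i]
  have hsum2 : ∑ i ∈ Finset.range (e + 1), (e - i) = ∑ i ∈ Finset.range (e + 1), i := by
    have h := Finset.sum_range_reflect (fun i => i) (e + 1)
    simpa using h
  have hgauss : 2 * ∑ i ∈ Finset.range (e + 1), i = e * (e + 1) := by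
    have h := Finset.sum_range_id_mul_two (e + 1)
    rw [Nat.add_sub_cancel] at h
    rw [mul_comm 2, h, mul_comm]
  -- total: transmission + slack = e * n
  have htot : transmission G v + ∑ u : Fin n, (e - G.dist v u) = e * n := by
    rw [transmission, ← Finset.sum_add_distrib]
    have : ∀ u : Fin n, G.dist v u + (e - G.dist v u) = e := fun u => by
      have := hdist_le u; omega
    simp only [this]
    simp [Finset.card_univ, mul_comm]
  -- combine: 2 * t + e*(e+1) ≤ 2*e*n
  have h1 : e * (e + 1) ≤ 2 * ∑ u : Fin n, (e - G.dist v u) := by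
    rw [← hgauss]
    have := hkey
    rw [hsum1, hsum2] at this
    omega
  have h2 : 2 * transmission G v + e * (e + 1) ≤ 2 * (e * n) := by
    omega
  -- D ≤ n - 1
  have hDn : D ≤ n - 1 := by
    apply Finset.sup_le
    rintro ⟨a, b⟩ _
    dsimp only
    obtain ⟨p, hp, hlen⟩ := hG.exists_path_of_dist a b
    have := hp.length_lt
    simp only [Fintype.card_fin] at this
    omega
  -- monotonicity: e*(2n - e - 1) ≤ D*(2n - D - 1) for e ≤ D ≤ n-1
  -- i.e. 2*t ≤ 2*e*n - e*(e+1) ≤ 2*D*n - D*(D+1)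
  obtain ⟨m, rfl⟩ : ∃ m, n = m + 1 := ⟨n - 1, by omega⟩
  have hDm : D ≤ m := by omega
  have hmono : 2 * (e * (m + 1)) + D * (D + 1) ≤ 2 * (D * (m + 1)) + e * (e + 1) := by
    zify
    nlinarith [mul_nonneg (by push_cast; omega : (0:ℤ) ≤ (D:ℤ) - e)
      (by push_cast; omega : (0:ℤ) ≤ 2*(m:ℤ)+1-D-e)]
  have hee : e * (e + 1) ≤ D * (D + 1) := Nat.mul_le_mul heD (by omega)
  have hfin : 2 * transmission G v + D * (D + 1) ≤ 2 * (D * (m + 1)) := by omega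
  calc 2 * transmission G v + D * (D + 1)
      ≤ 2 * (D * (m + 1)) := hfin
    _ = 2 * D * (m + 1) := by ring

theorem remoteness_le_diam_bound {n : ℕ} (G : SimpleGraph (Fin n)) (hG : G.Connected) :
    remoteness G ≤ (graphDiam G : ℝ) -
      ((graphDiam G : ℝ) ^ 2 - graphDiam G) / (2 * (n - 1)) := by
  classical
  have hne : Nonempty (Fin n) := hG.nonempty
  have hn : 1 ≤ n := Fin.pos_iff_nonempty.mpr hne
  rcases eq_or_lt_of_le hn with h1 | h2
  · -- n = 1
    have hn1 : n = 1 := h1.symm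
    subst hn1
    have hden : ((1:ℕ):ℝ) - 1 = 0 := by norm_num
    rw [remoteness, hden, div_zero, mul_zero, div_zero, sub_zero]
    positivity
  · -- n ≥ 2
    set D : ℝ := (graphDiam G : ℝ) with hD
    have hc : (0:ℝ) < (n:ℝ) - 1 := by
      have : (2:ℝ) ≤ (n:ℝ) := by exact_mod_cast h2
      linarith
    have hbound : ∀ v : Fin n, (transmission G v : ℝ) ≤ D * ((n:ℝ) - 1) - (D^2 - D) / 2 := by
      intro v
      have h := transmission_bound G hG v
      have h' : 2 * (transmission G v : ℝ) + D * (D + 1) ≤ 2 * D * n := by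
        rw [hD]
        exact_mod_cast h
      nlinarith [h']
    have hsup : sSup {x : ℝ | ∃ v : Fin n, x = transmission G v}
        ≤ D * ((n:ℝ) - 1) - (D^2 - D) / 2 := by
      apply csSup_le
      · obtain ⟨v⟩ := hne
        exact ⟨(transmission G v : ℝ), v, rfl⟩
      · rintro x ⟨v, rfl⟩
        exact hbound v
    have heq : (D * ((n:ℝ) - 1) - (D^2 - D) / 2) / ((n:ℝ) - 1)
        = D - (D^2 - D) / (2 * ((n:ℝ) - 1)) := by
      field_simp
    rw [remoteness, ← heq]
    gcongr
end
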